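/- arXiv:1401.3297 — 3 statements merged into one kernel-verified Lean document; each statement's English description precedes it below -/
import Mathlib

section
/- For every α ∈ [2/3, 1), the series ∑_{i=1}^∞ q₋ᵢ(α) converges and α + ∑_{i=1}^∞ q₋ᵢ(α) = 1. Since each q₋ᵢ(α) ≥ 0, the assignment q₁ = α, q₋ᵢ = q₋ᵢ(α) for i ≥ 1 defines a probability distribution on {…, −3, −2, −1, 1} ⊂ ℤ. -/
/-!
Writing `x = (1 - α) / (2α)`, so that `2/α - 2 = 4x`, the weights telescope:
`q₋₍ₙ₊₁₎(α) = T n - T (n + 1)` with `T n = (1 - α) Cₙ xⁿ`, `Cₙ` the Catalan numbers.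
For `α ≥ 2/3` we have `0 ≤ x ≤ 1/4`, so `Cₙ xⁿ ≤ Cₙ / 4ⁿ ≤ 1/(n + 1) → 0`, and the series
sums to `T 0 = 1 - α`.
-/

/-- The peeling step weight `q₋ᵢ(α)` for `i ≥ 1`:
`q₋ᵢ(α) = (2/4^i) · ((2i−2)!/((i−1)!·(i+1)!)) · (2/α − 2)^i · ((3α−2)·i + 1)`. -/
noncomputable def qneg (α : ℝ) (i : ℕ) : ℝ :=
  2 / 4 ^ i *
    ((Nat.factorial (2 * i - 2) : ℝ) /
      ((Nat.factorial (i - 1) : ℝ) * (Nat.factorial (i + 1) : ℝ))) *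
    (2 / α - 2) ^ i * ((3 * α - 2) * i + 1)

open Filter Topology Nat

theorem succ_succ_mul_catalan_succ (n : ℕ) :
    (n + 2) * catalan (n + 1) = 2 * (2 * n + 1) * catalan n := by
  apply Nat.eq_of_mul_eq_mul_left n.succ_pos
  calc (n + 1) * ((n + 2) * catalan (n + 1)) = (n + 1) * centralBinom (n + 1) := by
        rw [← succ_mul_catalan_eq_centralBinom]
    _ = 2 * (2 * n + 1) * centralBinom n := succ_mul_centralBinom_succ n
    _ = (n + 1) * (2 * (2 * n + 1) * catalan n) := by
        rw [← succ_mul_catalan_eq_centralBinom]; ring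

theorem factorial_two_mul_div_factorial_mul_factorial_add_two (n : ℕ) :
    ((2 * n)! : ℝ) / (n ! * (n + 2)!) = catalan n / (n + 2) := by
  have h2n : ((2 * n)! : ℝ) = (n + 1) * catalan n * n ! * n ! := by
    rw [two_mul, ← add_choose_mul_factorial_mul_factorial, ← two_mul,
      ← centralBinom_eq_two_mul_choose, ← succ_mul_catalan_eq_centralBinom]
    push_cast; ring
  have hn2 : ((n + 2)! : ℝ) = (n + 2) * (n + 1) * n ! := by
    push_cast [factorial_succ]; ring
  rw [h2n, hn2]
  field_simp

theorem catalan_le_four_pow_div (n : ℕ) : (catalan n : ℝ) ≤ 4 ^ n / (n + 1) := by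
  rw [le_div_iff₀ (by positivity), mul_comm]
  exact_mod_cast (succ_mul_catalan_eq_centralBinom n).trans_le (centralBinom_le_four_pow n)

theorem tendsto_catalan_mul_pow_atTop_zero {x : ℝ} (hx : |x| ≤ 1 / 4) :
    Tendsto (fun n ↦ (catalan n : ℝ) * x ^ n) atTop (𝓝 0) := by
  refine squeeze_zero_norm (fun n ↦ ?_) tendsto_one_div_add_atTop_nhds_zero_nat
  calc ‖(catalan n : ℝ) * x ^ n‖ = catalan n * |x| ^ n := by
        rw [norm_mul, norm_pow, Real.norm_natCast, Real.norm_eq_abs]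
    _ ≤ 4 ^ n / (n + 1) * (1 / 4) ^ n := by
        gcongr
        exact catalan_le_four_pow_div n
    _ = 1 / (n + 1) := by rw [div_mul_eq_mul_div, ← mul_pow]; norm_num

/-- The tail `∑_{i > n} q₋ᵢ(α)`. -/
noncomputable def qnegTail (α : ℝ) (n : ℕ) : ℝ :=
  (1 - α) * catalan n * ((1 - α) / (2 * α)) ^ n

theorem qnegTail_zero (α : ℝ) : qnegTail α 0 = 1 - α := by
  simp [qnegTail]

theorem qneg_succ_eq_qnegTail_sub {α : ℝ} (hα : α ≠ 0) (n : ℕ) :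
    qneg α (n + 1) = qnegTail α n - qnegTail α (n + 1) := by
  have hcat : (catalan (n + 1) : ℝ) = 2 * (2 * n + 1) / (n + 2) * catalan n := by
    rw [div_mul_eq_mul_div, eq_div_iff (by positivity), mul_comm]
    exact_mod_cast succ_succ_mul_catalan_succ n
  have hpow : 2 / 4 ^ (n + 1) * (2 / α - 2) ^ (n + 1) = 2 * ((1 - α) / (2 * α)) ^ (n + 1) := by
    rw [← show (2 / α - 2) / 4 = (1 - α) / (2 * α) by field_simp; ring, div_pow]
    ring
  rw [qneg, qnegTail, qnegTail, show 2 * (n + 1) - 2 = 2 * n by omega, add_tsub_cancel_right,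
    factorial_two_mul_div_factorial_mul_factorial_add_two, hcat, mul_right_comm _ _ (_ ^ _),
    hpow, pow_succ]
  generalize ((1 - α) / (2 * α)) ^ n = y
  push_cast
  field_simp
  ring

theorem tendsto_qnegTail_atTop_zero {α : ℝ} (hα : α ∈ Set.Icc (2 / 3 : ℝ) 1) :
    Tendsto (qnegTail α) atTop (𝓝 0) := by
  obtain ⟨hα₁, hα₂⟩ := hα
  have hx : |(1 - α) / (2 * α)| ≤ 1 / 4 := by
    rw [abs_of_nonneg (by apply div_nonneg <;> linarith), div_le_iff₀ (by linarith)]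
    linarith
  have h := (tendsto_catalan_mul_pow_atTop_zero hx).const_mul (1 - α)
  rw [mul_zero] at h
  exact h.congr fun n ↦ (mul_assoc _ _ _).symm

theorem qneg_nonneg {α : ℝ} (hα : α ∈ Set.Icc (2 / 3 : ℝ) 1) (i : ℕ) : 0 ≤ qneg α i := by
  obtain ⟨hα₁, hα₂⟩ := hα
  have hx : 0 ≤ 2 / α - 2 := by
    rw [sub_nonneg, le_div_iff₀ (by linarith)]
    linarith
  have hlin : 0 ≤ (3 * α - 2) * i + 1 := by
    have := mul_nonneg (sub_nonneg.2 (by linarith : 2 ≤ 3 * α)) i.cast_nonneg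
    linarith
  unfold qneg
  positivity

theorem hasSum_qneg_succ {α : ℝ} (hα : α ∈ Set.Icc (2 / 3 : ℝ) 1) :
    HasSum (fun i ↦ qneg α (i + 1)) (1 - α) := by
  have hα₀ : α ≠ 0 := by linarith [hα.1]
  rw [hasSum_iff_tendsto_nat_of_nonneg fun i ↦ qneg_nonneg hα (i + 1)]
  have hpartial (n : ℕ) : ∑ i ∈ Finset.range n, qneg α (i + 1) = qnegTail α 0 - qnegTail α n := by
    rw [← Finset.sum_range_sub']
    exact Finset.sum_congr rfl fun i _ ↦ qneg_succ_eq_qnegTail_sub hα₀ i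
  simpa only [hpartial, qnegTail_zero, sub_zero] using
    (tendsto_qnegTail_atTop_zero hα).const_sub (1 - α)

/-- For `α ∈ [2/3, 1)` the series `∑_{i≥1} q₋ᵢ(α)` converges,
`α + ∑_{i≥1} q₋ᵢ(α) = 1`, and all the weights are nonnegative, so that
`q₁ = α`, `q₋ᵢ = q₋ᵢ(α)` defines a probability distribution on `{…,−3,−2,−1,1}`. -/
theorem qneg_prob_distribution (α : ℝ) (hα : α ∈ Set.Ico (2/3 : ℝ) 1) :
    Summable (fun i : ℕ => qneg α (i + 1)) ∧
    α + ∑' i : ℕ, qneg α (i + 1) = 1 ∧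
    (∀ i : ℕ, 1 ≤ i → 0 ≤ qneg α i) := by
  have hα' : α ∈ Set.Icc (2 / 3 : ℝ) 1 := Set.Ico_subset_Icc_self hα
  have hsum := hasSum_qneg_succ hα'
  refine ⟨hsum.summable, ?_, fun i _ ↦ qneg_nonneg hα' i⟩
  rw [hsum.tsum_eq]
  ring
end

section
/- For every α ∈ [2/3, 1), the series ∑_{i=1}^∞ i·q₋ᵢ(α) converges and the mean step of the distribution q, namely δ(α) := α − ∑_{i=1}^∞ i·q₋ᵢ(α), equals √(α(3α−2)). In particular δ(α) > 0 whenever α ∈ (2/3, 1), and δ(α) < α. -/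
open Finset

theorem centralBinom_succ_add_two_mul_catalan (n : ℕ) :
    (n + 1).centralBinom + 2 * catalan n = 4 * n.centralBinom := by
  refine Nat.eq_of_mul_eq_mul_left (by omega : 0 < n + 1) ?_
  have h1 := Nat.succ_mul_centralBinom_succ n
  have h2 := succ_mul_catalan_eq_centralBinom n
  linear_combination h1 + 2 * h2

theorem sum_range_catalan_div_four_pow_le (N : ℕ) :
    ∑ n ∈ range N, (catalan n : ℝ) / 4 ^ (n + 1) ≤ 1 / 2 := by
  have hterm (n : ℕ) : (catalan n : ℝ) / 4 ^ (n + 1) =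
      ((n.centralBinom : ℝ) / 4 ^ n - ((n + 1).centralBinom : ℝ) / 4 ^ (n + 1)) / 2 := by
    have h : ((n + 1).centralBinom : ℝ) + 2 * catalan n = 4 * n.centralBinom := by
      exact_mod_cast centralBinom_succ_add_two_mul_catalan n
    field_simp
    linear_combination (4 : ℝ) ^ n * h
  simp_rw [hterm, ← sum_div, sum_range_sub']
  have : 0 ≤ (N.centralBinom : ℝ) / 4 ^ N := by positivity
  simp only [Nat.centralBinom_zero, Nat.cast_one, pow_zero, div_one]
  linarith

section GeneratingFunctions

variable {x : ℝ}

theorem sum_range_catalan_mul_pow_le (hx₀ : 0 ≤ x) (hx₁ : x ≤ 1 / 4) (N : ℕ) :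
    ∑ n ∈ range N, (catalan n : ℝ) * x ^ (n + 1) ≤ 1 / 2 := by
  refine (sum_le_sum fun n _ => ?_).trans (sum_range_catalan_div_four_pow_le N)
  rw [div_eq_mul_one_div, ← one_div_pow]
  gcongr

theorem tsum_catalan_mul_pow_eq_add_sq (hx₀ : 0 ≤ x)
    (hsum : Summable fun n => (catalan n : ℝ) * x ^ (n + 1)) :
    ∑' n, (catalan n : ℝ) * x ^ (n + 1) = x + (∑' n, (catalan n : ℝ) * x ^ (n + 1)) ^ 2 := by
  have hnonneg (n : ℕ) : 0 ≤ (catalan n : ℝ) * x ^ (n + 1) := by positivity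
  rw [sq, hsum.tsum_mul_tsum_eq_tsum_sum_antidiagonal hsum
    (hsum.mul_of_nonneg hsum hnonneg hnonneg), hsum.tsum_eq_zero_add]
  congr 1
  · simp
  refine tsum_congr fun n => ?_
  rw [catalan_succ', Nat.cast_sum, sum_mul]
  refine sum_congr rfl fun kl hkl => ?_
  rw [← mem_antidiagonal.mp hkl]
  push_cast
  ring

theorem hasSum_catalan_mul_pow (hx₀ : 0 ≤ x) (hx₁ : x ≤ 1 / 4) :
    HasSum (fun n => (catalan n : ℝ) * x ^ (n + 1)) ((1 - √(1 - 4 * x)) / 2) := by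
  have hnonneg (n : ℕ) : 0 ≤ (catalan n : ℝ) * x ^ (n + 1) := by positivity
  have hsum := summable_of_sum_range_le hnonneg (sum_range_catalan_mul_pow_le hx₀ hx₁)
  have hle := Real.tsum_le_of_sum_range_le hnonneg (sum_range_catalan_mul_pow_le hx₀ hx₁)
  have hquad := tsum_catalan_mul_pow_eq_add_sq hx₀ hsum
  set y := ∑' n, (catalan n : ℝ) * x ^ (n + 1)
  have hsqrt : √(1 - 4 * x) = 1 - 2 * y := by
    rw [show 1 - 4 * x = (1 - 2 * y) ^ 2 by linear_combination 4 * hquad,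
      Real.sqrt_sq (by linarith)]
  convert hsum.hasSum using 1
  linarith

theorem hasSum_one_sub_four_mul_mul_centralBinom_mul_pow (hx₀ : 0 ≤ x) (hx₁ : x ≤ 1 / 4) :
    HasSum (fun n => (1 - 4 * x) * ((n.centralBinom : ℝ) * x ^ n)) √(1 - 4 * x) := by
  rcases hx₁.eq_or_lt with rfl | hlt
  · norm_num
  have hsum : Summable fun n => (n.centralBinom : ℝ) * x ^ n := by
    refine (summable_geometric_of_lt_one (by positivity) (by linarith : 4 * x < 1)).of_nonneg_of_le
      (fun n => by positivity) fun n => ?_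
    rw [mul_pow]
    gcongr
    exact_mod_cast Nat.centralBinom_le_four_pow n
  set S := ∑' n, (n.centralBinom : ℝ) * x ^ n
  have hshift : HasSum (fun n => ((n + 1).centralBinom : ℝ) * x ^ (n + 1)) (S - 1) := by
    simpa using (hasSum_nat_add_iff' 1).mpr hsum.hasSum
  have hrec : HasSum (fun n => ((n + 1).centralBinom : ℝ) * x ^ (n + 1))
      (4 * x * S - 2 * ((1 - √(1 - 4 * x)) / 2)) := by
    refine ((hsum.hasSum.mul_left (4 * x)).sub
      ((hasSum_catalan_mul_pow hx₀ hx₁).mul_left 2)).congr_fun fun n => ?_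
    have h : ((n + 1).centralBinom : ℝ) + 2 * catalan n = 4 * n.centralBinom := by
      exact_mod_cast centralBinom_succ_add_two_mul_catalan n
    linear_combination x ^ (n + 1) * h
  rw [show √(1 - 4 * x) = (1 - 4 * x) * S by linear_combination -hshift.unique hrec]
  exact hsum.hasSum.mul_left _

end GeneratingFunctions

open Nat in
theorem centralBinom_mul_factorial_mul_factorial (n : ℕ) :
    n.centralBinom * n ! * n ! = (2 * n)! := by
  rw [Nat.centralBinom_eq_two_mul_choose]
  have := Nat.choose_mul_factorial_mul_factorial (by omega : n ≤ 2 * n)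
  rwa [show 2 * n - n = n by omega] at this

open Nat in
theorem succ_mul_qneg_succ {α x : ℝ} (hαx : α * (1 + 2 * x) = 1) (j : ℕ) :
    ((j + 1 : ℕ) : ℝ) * qneg α (j + 1) =
      (1 - α) * ((1 - 4 * x) * ((j.centralBinom : ℝ) * x ^ j))
        + 2 * α * ((catalan (j + 1) : ℝ) * x ^ (j + 2))
        + 2 * (1 - α) * ((catalan j : ℝ) * x ^ (j + 1)) := by
  have hx' : 1 + 2 * x ≠ 0 := right_ne_zero_of_mul_eq_one hαx
  obtain rfl : α = 1 / (1 + 2 * x) := eq_one_div_of_mul_eq_one_left hαx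
  have hfac : ((2 * j)! : ℝ) = j.centralBinom * j ! * j ! := by
    exact_mod_cast (centralBinom_mul_factorial_mul_factorial j).symm
  have hcat : (catalan j : ℝ) = j.centralBinom / (j + 1) := by
    rw [eq_div_iff (by positivity), mul_comm]
    exact_mod_cast succ_mul_catalan_eq_centralBinom j
  have hcat' : (catalan (j + 1) : ℝ) = 2 * (2 * j + 1) * j.centralBinom / ((j + 1) * (j + 2)) := by
    have h1 : ((j : ℝ) + 1 + 1) * catalan (j + 1) = (j + 1).centralBinom := by
      exact_mod_cast succ_mul_catalan_eq_centralBinom (j + 1)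
    have h2 : ((j : ℝ) + 1) * (j + 1).centralBinom = 2 * (2 * j + 1) * j.centralBinom := by
      exact_mod_cast Nat.succ_mul_centralBinom_succ j
    rw [eq_div_iff (by positivity)]
    linear_combination (j + 1 : ℝ) * h1 + h2
  unfold qneg
  rw [show 2 * (j + 1) - 2 = 2 * j by omega, Nat.add_sub_cancel, hfac, hcat, hcat',
    Nat.factorial_succ (j + 1), Nat.factorial_succ j]
  push_cast
  field_simp
  ring

/-- For `α ∈ [2/3, 1)` the series `∑_{i≥1} i·q₋ᵢ(α)` converges and the mean step
`δ(α) = α − ∑_{i≥1} i·q₋ᵢ(α)` equals `√(α(3α−2))`; moreover `δ(α) < α`, and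
`δ(α) > 0` whenever `α ∈ (2/3, 1)`. -/
theorem qneg_mean_drift (α : ℝ) (hα : α ∈ Set.Ico (2/3 : ℝ) 1) :
    Summable (fun i : ℕ => ((i + 1 : ℕ) : ℝ) * qneg α (i + 1)) ∧
    α - ∑' i : ℕ, ((i + 1 : ℕ) : ℝ) * qneg α (i + 1) = Real.sqrt (α * (3 * α - 2)) ∧
    Real.sqrt (α * (3 * α - 2)) < α ∧
    (α ∈ Set.Ioo (2/3 : ℝ) 1 → 0 < Real.sqrt (α * (3 * α - 2))) := by
  obtain ⟨hα₁, hα₂⟩ := hα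
  have hα₀ : 0 < α := by linarith
  set x := (1 - α) / (2 * α) with hx
  have hαx : α * (1 + 2 * x) = 1 := by
    rw [hx]
    field_simp
    ring
  have hx₀ : 0 ≤ x := div_nonneg (by linarith) (by linarith)
  have hx₁ : x ≤ 1 / 4 := by
    rw [hx, div_le_iff₀ (by linarith)]
    linarith
  have hcat := hasSum_catalan_mul_pow hx₀ hx₁
  have hcat' : HasSum (fun n => (catalan (n + 1) : ℝ) * x ^ (n + 2))
      ((1 - √(1 - 4 * x)) / 2 - x) := by
    simpa using (hasSum_nat_add_iff' 1).mpr hcat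
  set s := √(1 - 4 * x)
  have hmean : HasSum (fun i : ℕ => ((i + 1 : ℕ) : ℝ) * qneg α (i + 1)) (α - α * s) := by
    have h := ((((hasSum_one_sub_four_mul_mul_centralBinom_mul_pow hx₀ hx₁).mul_left (1 - α)).add
      (hcat'.mul_left (2 * α))).add (hcat.mul_left (2 * (1 - α)))).congr_fun
      (succ_mul_qneg_succ hαx)
    rwa [show (1 - α) * s + 2 * α * ((1 - s) / 2 - x) + 2 * (1 - α) * ((1 - s) / 2) = α - α * s by
      linear_combination -hαx] at h
  have hδ : α * s = √(α * (3 * α - 2)) := by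
    have h : α * (3 * α - 2) = α ^ 2 * (1 - 4 * x) := by
      rw [hx]
      field_simp
      ring
    rw [h, Real.sqrt_mul (sq_nonneg α), Real.sqrt_sq hα₀.le]
  refine ⟨hmean.summable, by rw [hmean.tsum_eq, ← hδ]; ring, ?_,
    fun ⟨h₁, _⟩ => Real.sqrt_pos.mpr (by nlinarith)⟩
  rw [Real.sqrt_lt' hα₀]
  nlinarith
end

section
/- There exist an integer m₀ ≥ 1 and a real constant c₁ > 0 such that for all integers p ≥ 2 and n ≥ m₀·p, one has 2·(3n+2p−3) · ((2p−3)! / ((p−2)!·(p−2)!)) · 2^{n+1} · (2p+3n−4)! / (n!·(2p+2n−2)!) ≤ c₁ · √(p/n³) · 9^p · (27/2)^n. -/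
/-!
Write `p = m + 2`. The first factorial quotient is `(2m+1)·C(2m,m)`, and `C(2m,m)² (3m+1) ≤ 16^m`.
In the second one, raising `m` by one multiplies `(3n+2m)!/(2n+2m+2)!` by at most `9/4`, which
reduces it to `C(3n,n)/((2n+1)(2n+2))`, and `C(3n,n)² (4n+1) ≤ (27/4)^{2n}`. Both binomial estimates
follow by induction from the ratio of consecutive terms. For `p ≤ n` the polynomial factors then
combine to `5 √(p/n³)`, so `m₀ = 1` and `c₁ = 1` work.
-/

open Nat Real

theorem centralBinom_sq_mul_le (m : ℕ) : centralBinom m ^ 2 * (3 * m + 1) ≤ 16 ^ m := by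
  induction m with
  | zero => simp
  | succ m ih =>
    have hpoly : (2 * m + 1) ^ 2 * (3 * m + 4) ≤ 4 * (m + 1) ^ 2 * (3 * m + 1) := by nlinarith
    refine Nat.le_of_mul_le_mul_right (c := (m + 1) ^ 2) ?_ (by positivity)
    calc centralBinom (m + 1) ^ 2 * (3 * (m + 1) + 1) * (m + 1) ^ 2
        = ((m + 1) * centralBinom (m + 1)) ^ 2 * (3 * m + 4) := by ring
      _ = 4 * centralBinom m ^ 2 * ((2 * m + 1) ^ 2 * (3 * m + 4)) := by
          rw [succ_mul_centralBinom_succ]; ring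
      _ ≤ 4 * centralBinom m ^ 2 * (4 * (m + 1) ^ 2 * (3 * m + 1)) := by gcongr
      _ = 16 * (m + 1) ^ 2 * (centralBinom m ^ 2 * (3 * m + 1)) := by ring
      _ ≤ 16 * (m + 1) ^ 2 * 16 ^ m := by gcongr
      _ = 16 ^ (m + 1) * (m + 1) ^ 2 := by ring

theorem factorial_three_mul_sq_mul_le (n : ℕ) :
    (3 * n)! ^ 2 * (4 * n + 1) * 16 ^ n ≤ 729 ^ n * (n ! * (2 * n)!) ^ 2 := by
  induction n with
  | zero => simp
  | succ n ih =>
    have hpoly : 4 * (3 * n + 2) ^ 2 * (3 * n + 1) ^ 2 * (4 * n + 5) ≤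
        81 * (n + 1) ^ 2 * (2 * n + 1) ^ 2 * (4 * n + 1) := by nlinarith
    have h3 : (3 * (n + 1))! = (3 * n + 3) * (3 * n + 2) * (3 * n + 1) * (3 * n)! := by
      rw [show 3 * (n + 1) = 3 * n + 2 + 1 by ring, factorial_succ, factorial_succ, factorial_succ]
      ring
    have h2 : (2 * (n + 1))! = (2 * n + 2) * (2 * n + 1) * (2 * n)! := by
      rw [show 2 * (n + 1) = 2 * n + 1 + 1 by ring, factorial_succ, factorial_succ]
      ring
    refine Nat.le_of_mul_le_mul_right (c := 4 * n + 1) ?_ (by positivity)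
    calc (3 * (n + 1))! ^ 2 * (4 * (n + 1) + 1) * 16 ^ (n + 1) * (4 * n + 1)
        = 36 * (n + 1) ^ 2 * (4 * (3 * n + 2) ^ 2 * (3 * n + 1) ^ 2 * (4 * n + 5)) *
            ((3 * n)! ^ 2 * (4 * n + 1) * 16 ^ n) := by rw [h3]; ring
      _ ≤ 36 * (n + 1) ^ 2 * (81 * (n + 1) ^ 2 * (2 * n + 1) ^ 2 * (4 * n + 1)) *
            (729 ^ n * (n ! * (2 * n)!) ^ 2) := by gcongr
      _ = 729 ^ (n + 1) * ((n + 1)! * (2 * (n + 1))!) ^ 2 * (4 * n + 1) := by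
          rw [h2, factorial_succ]; ring

theorem factorial_add_mul_pow_mul_factorial_le {a b x y : ℕ} (hxy : x ≤ y) (hab : x * a ≤ y * b)
    (k : ℕ) : (a + k)! * x ^ k * b ! ≤ y ^ k * (b + k)! * a ! := by
  induction k with
  | zero => simp [mul_comm]
  | succ k ih =>
    have hstep : x * (a + k + 1) ≤ y * (b + k + 1) := by nlinarith
    calc (a + (k + 1))! * x ^ (k + 1) * b ! = x * (a + k + 1) * ((a + k)! * x ^ k * b !) := by
          rw [← add_assoc, factorial_succ]; ring
      _ ≤ y * (b + k + 1) * (y ^ k * (b + k)! * a !) := by gcongr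
      _ = y ^ (k + 1) * (b + (k + 1))! * a ! := by rw [← add_assoc, factorial_succ]; ring

theorem factorial_two_mul_add_one_div_le (m : ℕ) :
    ((2 * m + 1)! : ℝ) / (m ! * m !) ≤ 2 * √(m + 2) * 4 ^ m := by
  have hchoose : ((2 * m + 1)! : ℝ) / (m ! * m !) = (2 * m + 1) * centralBinom m := by
    rw [centralBinom_eq_two_mul_choose, factorial_succ, two_mul,
      ← add_choose_mul_factorial_mul_factorial m m]
    push_cast
    field_simp
    ring
  have hbinom : (centralBinom m : ℝ) ^ 2 * (3 * m + 1) ≤ 16 ^ m := by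
    exact_mod_cast centralBinom_sq_mul_le m
  have hpoly : (2 * m + 1 : ℝ) ^ 2 ≤ 4 * (m + 2) * (3 * m + 1) := by nlinarith
  rw [hchoose, ← pow_le_pow_iff_left₀ (by positivity) (by positivity) two_ne_zero]
  calc ((2 * m + 1) * (centralBinom m : ℝ)) ^ 2 = (2 * m + 1) ^ 2 * (centralBinom m : ℝ) ^ 2 := by
        ring
    _ ≤ 4 * (m + 2) * (3 * m + 1) * (centralBinom m : ℝ) ^ 2 := by gcongr
    _ = 4 * (m + 2) * ((centralBinom m : ℝ) ^ 2 * (3 * m + 1)) := by ring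
    _ ≤ 4 * (m + 2) * 16 ^ m := by gcongr
    _ = (2 * √((m : ℝ) + 2) * 4 ^ m) ^ 2 := by
      rw [mul_pow, mul_pow, sq_sqrt (by positivity), ← pow_mul, mul_comm m 2, pow_mul]; norm_num

theorem factorial_three_mul_div_le {n : ℕ} (hn : 1 ≤ n) :
    ((3 * n)! : ℝ) / (n ! * (2 * n + 2)!) ≤ (27 / 4) ^ n / (8 * n ^ 2 * √n) := by
  have hn0 : (0 : ℝ) < n := by exact_mod_cast hn
  have hbinom : ((3 * n)! : ℝ) ^ 2 * (4 * n + 1) * 16 ^ n ≤ 729 ^ n * (n ! * (2 * n)!) ^ 2 := by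
    exact_mod_cast factorial_three_mul_sq_mul_le n
  have hfact : ((2 * n + 2)! : ℝ) = (2 * n + 2) * (2 * n + 1) * (2 * n)! := by
    push_cast [factorial_succ]; ring
  have hpoly : 64 * (n : ℝ) ^ 5 ≤ (4 * n + 1) * ((2 * n + 2) * (2 * n + 1)) ^ 2 := by
    nlinarith [pow_pos hn0 2, pow_pos hn0 3, pow_pos hn0 4, pow_pos hn0 5]
  rw [le_div_iff₀ (by positivity), ← pow_le_pow_iff_left₀ (by positivity) (by positivity) two_ne_zero,
    hfact]
  calc ((3 * n)! / (n ! * ((2 * n + 2) * (2 * n + 1) * (2 * n)!)) * (8 * (n : ℝ) ^ 2 * √n)) ^ 2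
      = ((3 * n)! : ℝ) ^ 2 * (64 * n ^ 5) /
          ((n ! * (2 * n)!) ^ 2 * ((2 * n + 2) * (2 * n + 1)) ^ 2) := by
        rw [mul_pow, mul_pow (8 * _), sq_sqrt hn0.le, div_pow]; ring
    _ ≤ ((3 * n)! : ℝ) ^ 2 * ((4 * n + 1) * ((2 * n + 2) * (2 * n + 1)) ^ 2) /
          ((n ! * (2 * n)!) ^ 2 * ((2 * n + 2) * (2 * n + 1)) ^ 2) := by gcongr
    _ = ((3 * n)! : ℝ) ^ 2 * (4 * n + 1) / (n ! * (2 * n)!) ^ 2 := by field_simp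
    _ ≤ (729 / 16 : ℝ) ^ n := by
        rw [div_le_iff₀ (by positivity), div_pow, div_mul_eq_mul_div, le_div_iff₀ (by positivity)]
        linarith
    _ = ((27 / 4) ^ n) ^ 2 := by rw [← pow_mul, mul_comm n 2, pow_mul]; norm_num

theorem factorial_three_mul_add_two_mul_div_le (n m : ℕ) :
    ((3 * n + 2 * m)! : ℝ) / (n ! * (2 * n + 2 * m + 2)!) ≤
      (9 / 4) ^ m * ((3 * n)! / (n ! * (2 * n + 2)!)) := by
  have h := factorial_add_mul_pow_mul_factorial_le (a := 3 * n) (b := 2 * n + 2) (x := 2) (y := 3)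
    (by norm_num) (by omega) (2 * m)
  rw [show 2 * n + 2 + 2 * m = 2 * n + 2 * m + 2 by ring, pow_mul, pow_mul] at h
  have hR : ((3 * n + 2 * m)! : ℝ) * 4 ^ m * (2 * n + 2)! ≤
      9 ^ m * (2 * n + 2 * m + 2)! * (3 * n)! := by
    exact_mod_cast h
  calc ((3 * n + 2 * m)! : ℝ) / (n ! * (2 * n + 2 * m + 2)!)
      ≤ 9 ^ m * (3 * n)! / (4 ^ m * (n ! * (2 * n + 2)!)) := by
        rw [div_le_div_iff₀ (by positivity) (by positivity)]
        calc ((3 * n + 2 * m)! : ℝ) * (4 ^ m * (n ! * (2 * n + 2)!))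
            = n ! * ((3 * n + 2 * m)! * 4 ^ m * (2 * n + 2)!) := by ring
          _ ≤ n ! * (9 ^ m * (2 * n + 2 * m + 2)! * (3 * n)!) := by gcongr
          _ = 9 ^ m * (3 * n)! * (n ! * (2 * n + 2 * m + 2)!) := by ring
    _ = (9 / 4) ^ m * ((3 * n)! / (n ! * (2 * n + 2)!)) := by rw [div_pow]; field_simp

/-- Key counting estimate for anchored expansion: there are `m₀ ≥ 1` and `c₁ > 0` such
that for all `p ≥ 2` and `n ≥ m₀·p`,
`2(3n+2p−3) · ((2p−3)!/((p−2)!(p−2)!)) · 2^{n+1} · (2p+3n−4)!/(n!(2p+2n−2)!)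
  ≤ c₁ √(p/n³) 9^p (27/2)^n`. -/
theorem triangulation_count_bound :
    ∃ m₀ : ℕ, 1 ≤ m₀ ∧ ∃ c₁ : ℝ, 0 < c₁ ∧
      ∀ p n : ℕ, 2 ≤ p → m₀ * p ≤ n →
        (2 * (3 * (n : ℝ) + 2 * (p : ℝ) - 3)) *
            ((Nat.factorial (2 * p - 3) : ℝ) /
              ((Nat.factorial (p - 2) : ℝ) * (Nat.factorial (p - 2) : ℝ))) *
            2 ^ (n + 1) *
            ((Nat.factorial (2 * p + 3 * n - 4) : ℝ) /
              ((Nat.factorial n : ℝ) * (Nat.factorial (2 * p + 2 * n - 2) : ℝ))) ≤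
          c₁ * Real.sqrt ((p : ℝ) / (n : ℝ) ^ 3) * 9 ^ p * (27 / 2) ^ n := by
  refine ⟨1, le_rfl, 1, one_pos, fun p n hp hpn => ?_⟩
  obtain ⟨m, rfl⟩ : ∃ m, p = m + 2 := ⟨p - 2, by omega⟩
  have hn : 1 ≤ n := by omega
  have hn0 : (0 : ℝ) < n := by exact_mod_cast hn
  have hmn : (m : ℝ) + 2 ≤ n := by exact_mod_cast (by omega : m + 2 ≤ n)
  have hA := factorial_two_mul_add_one_div_le m
  have hB : ((3 * n + 2 * m)! : ℝ) / (n ! * (2 * n + 2 * m + 2)!) ≤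
      (9 / 4) ^ m * ((27 / 4) ^ n / (8 * n ^ 2 * √n)) :=
    (factorial_three_mul_add_two_mul_div_le n m).trans
      (mul_le_mul_of_nonneg_left (factorial_three_mul_div_le hn) (by positivity))
  have hsqrt : √(((m : ℝ) + 2) / n ^ 3) = √(m + 2) / (n * √n) := by
    rw [sqrt_div (by positivity), pow_succ, sqrt_mul (by positivity), sqrt_sq hn0.le]
  rw [show 2 * (m + 2) - 3 = 2 * m + 1 by omega, show m + 2 - 2 = m by omega,
    show 2 * (m + 2) + 3 * n - 4 = 3 * n + 2 * m by omega,
    show 2 * (m + 2) + 2 * n - 2 = 2 * n + 2 * m + 2 by omega]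
  push_cast
  rw [hsqrt, show 2 * (3 * (n : ℝ) + 2 * (m + 2) - 3) = 2 * (3 * n + 2 * m + 1) by ring]
  calc 2 * (3 * (n : ℝ) + 2 * m + 1) * ((2 * m + 1)! / (m ! * m !)) * 2 ^ (n + 1) *
        ((3 * n + 2 * m)! / (n ! * (2 * n + 2 * m + 2)!))
      ≤ 2 * (3 * (n : ℝ) + 2 * m + 1) * (2 * √(m + 2) * 4 ^ m) * 2 ^ (n + 1) *
        ((9 / 4) ^ m * ((27 / 4) ^ n / (8 * n ^ 2 * √n))) := by gcongr
    _ = (3 * n + 2 * m + 1) / n * (√(m + 2) / (n * √n) * 9 ^ m * (27 / 2) ^ n) := by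
        rw [div_pow, div_pow, div_pow, show (4 : ℝ) ^ n = 2 ^ n * 2 ^ n by rw [← mul_pow]; norm_num]
        field_simp
        ring
    _ ≤ 81 * (√(m + 2) / (n * √n) * 9 ^ m * (27 / 2) ^ n) := by
        gcongr
        rw [div_le_iff₀ hn0]
        linarith
    _ = 1 * (√(m + 2) / (n * √n)) * 9 ^ (m + 2) * (27 / 2) ^ n := by ring
end
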